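/- arXiv:2510.03624 — 2 statements merged into one kernel-verified Lean document; each statement's English description precedes it below -/
import Mathlib

section
/- For any two matrices A, B ∈ ℝ^{m₁×m₂} and a > 0, the matrix TL1 penalty satisfies the triangle inequality φ_a(A + B) ≤ φ_a(A) + φ_a(B), where φ_a(A) = Σ_{i,j} (a+1)|A_{ij}|/(a + |A_{ij}|). -/
/-- The TL1 penalty of a single entry; `φ_a` sums it over all entries of a matrix. -/
noncomputable def tl1 (a t : ℝ) : ℝ := (a + 1) * t / (a + t)

section

variable {a : ℝ}

lemma tl1_monotoneOn (ha : 0 < a) : MonotoneOn (tl1 a) (Set.Ici 0) := by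
  intro s (hs : 0 ≤ s) t (ht : 0 ≤ t) hst
  unfold tl1
  rw [div_le_div_iff₀ (by linarith) (by linarith)]
  nlinarith [mul_le_mul_of_nonneg_left hst (by positivity : 0 ≤ a * (a + 1))]

lemma tl1_add_le (ha : 0 < a) {x y : ℝ} (hx : 0 ≤ x) (hy : 0 ≤ y) :
    tl1 a (x + y) ≤ tl1 a x + tl1 a y :=
  calc tl1 a (x + y) = (a + 1) * x / (a + (x + y)) + (a + 1) * y / (a + (x + y)) := by
        rw [tl1, mul_add, add_div]
    _ ≤ (a + 1) * x / (a + x) + (a + 1) * y / (a + y) := by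
        gcongr <;> linarith

lemma tl1_abs_add_le (ha : 0 < a) (x y : ℝ) : tl1 a |x + y| ≤ tl1 a |x| + tl1 a |y| :=
  calc tl1 a |x + y| ≤ tl1 a (|x| + |y|) :=
        tl1_monotoneOn ha (Set.mem_Ici.2 (abs_nonneg _)) (Set.mem_Ici.2 (by positivity))
          (abs_add_le x y)
    _ ≤ tl1 a |x| + tl1 a |y| := tl1_add_le ha (abs_nonneg x) (abs_nonneg y)

end

theorem tl1_matrix_triangle (m₁ m₂ : ℕ) (a : ℝ) (ha : 0 < a)
    (A B : Matrix (Fin m₁) (Fin m₂) ℝ) :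
    ∑ i, ∑ j, (a + 1) * |A i j + B i j| / (a + |A i j + B i j|) ≤
      (∑ i, ∑ j, (a + 1) * |A i j| / (a + |A i j|)) +
      ∑ i, ∑ j, (a + 1) * |B i j| / (a + |B i j|) := by
  simp only [← Finset.sum_add_distrib]
  gcongr with i _ j _
  exact tl1_abs_add_le ha (A i j) (B i j)
end

section
/- For any two matrices A, B ∈ ℝ^{m₁×m₂} and a > 0, φ_a(A) − φ_a(B) ≤ φ_a(A − B), where φ_a(A) = Σ_{i,j} (a+1)|A_{ij}|/(a + |A_{ij}|). -/
/-!
The map `t ↦ t / (a + t)` is monotone and subadditive on `[0, ∞)`. Applied to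
`|x| ≤ |y| + |x - y|` this gives the reverse triangle inequality entrywise, and summing over
the entries gives it for `φ_a`.
-/

section SaturatingRatio

variable {a x y : ℝ}

lemma div_add_self_le_div_add_self (ha : 0 < a) (hx : 0 ≤ x) (hxy : x ≤ y) :
    x / (a + x) ≤ y / (a + y) := by
  rw [div_le_div_iff₀ (by linarith) (by linarith)]
  nlinarith

lemma add_div_add_self_le (ha : 0 < a) (hx : 0 ≤ x) (hy : 0 ≤ y) :
    (x + y) / (a + (x + y)) ≤ x / (a + x) + y / (a + y) := by
  rw [add_div]
  gcongr <;> linarith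

lemma abs_div_add_abs_sub_le (ha : 0 < a) (x y : ℝ) :
    |x| / (a + |x|) - |y| / (a + |y|) ≤ |x - y| / (a + |x - y|) := by
  have htri : |x| ≤ |y| + |x - y| := by linarith [abs_sub_abs_le_abs_sub x y]
  have := (div_add_self_le_div_add_self ha (abs_nonneg x) htri).trans
    (add_div_add_self_le ha (abs_nonneg y) (abs_nonneg (x - y)))
  linarith

end SaturatingRatio

theorem tl1_matrix_reverse_triangle (m₁ m₂ : ℕ) (a : ℝ) (ha : 0 < a)
    (A B : Matrix (Fin m₁) (Fin m₂) ℝ) :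
    (∑ i, ∑ j, (a + 1) * |A i j| / (a + |A i j|)) -
      (∑ i, ∑ j, (a + 1) * |B i j| / (a + |B i j|)) ≤
      ∑ i, ∑ j, (a + 1) * |A i j - B i j| / (a + |A i j - B i j|) := by
  simp only [← Finset.sum_sub_distrib, mul_div_assoc, ← mul_sub]
  gcongr with i _ j _
  exact abs_div_add_abs_sub_le ha (A i j) (B i j)
end
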